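/- In a finite simple graph G with bipartition (A,B) such that G_AB is a forest each of whose connected components has at least one edge and at most one leaf lying in A ∩ (that component), the columns of Γ_AB indexed by the non-isolated vertices of A are linearly independent over F2. -/

import Mathlib

open scoped Classical

/-- The graph `G_AB` keeping only the edges of `G` between `A` and `B = Aᶜ`. -/
def bipartiteSub {V : Type*} [Fintype V] [DecidableEq V]
    (G : SimpleGraph V) (A : Finset V) : SimpleGraph V where
  Adj u v := G.Adj u v ∧ ((u ∈ A ∧ v ∈ Aᶜ) ∨ (u ∈ Aᶜ ∧ v ∈ A))
  symm := by
    refine ⟨?_⟩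
    intro u v h
    exact ⟨h.1.symm, h.2.symm.imp And.symm And.symm⟩
  loopless := ⟨fun v h => G.irrefl h.1⟩

/-! Suppose the columns indexed by a nonempty set `S ⊆ A` sum to zero over `F₂`: every vertex
of `B` then has an even number of neighbours in `S`. In the forest formed by the edges of `G_AB`
meeting `S`, the two ends of a longest path are leaves. A vertex outside `S` cannot be a leaf
(in `B` its degree is even, in `A` it is zero), so both ends lie in `S`, where they are leaves of
`G_AB` itself. They are distinct and in the same component, contradicting the hypothesis on
leaves. -/

theorem linearIndependent_zmod_two_iff {ι M : Type*} [AddCommGroup M] [Module (ZMod 2) M]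
    {v : ι → M} :
    LinearIndependent (ZMod 2) v ↔ ∀ s : Finset ι, ∑ i ∈ s, v i = 0 → s = ∅ := by
  rw [linearIndependent_iff']
  refine ⟨fun h s hs => ?_, fun h s g hg i hi => ?_⟩
  · by_contra hne
    obtain ⟨i, hi⟩ := Finset.nonempty_iff_ne_empty.mpr hne
    exact one_ne_zero (h s 1 (by simpa using hs) i hi)
  · have hg01 : ∀ j, g j • v j = if g j ≠ 0 then v j else 0 := fun j => by
      rcases (by decide : ∀ z : ZMod 2, z = 0 ∨ z = 1) (g j) with h | h <;> simp [h]
    have hempty := h (s.filter (g · ≠ 0)) (by rwa [Finset.sum_filter, ← Finset.sum_congr rfl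
      fun j _ => hg01 j])
    by_contra hgi
    exact Finset.notMem_empty i (hempty ▸ Finset.mem_filter.mpr ⟨hi, hgi⟩)

namespace SimpleGraph

variable {V : Type*} {G : SimpleGraph V}

theorem IsAcyclic.exists_ne_reachable_of_adj [Finite V] (hG : G.IsAcyclic) {u v : V}
    (huv : G.Adj u v) : ∃ x y, x ≠ y ∧ G.Reachable x y ∧
      (G.neighborSet x).ncard = 1 ∧ (G.neighborSet y).ncard = 1 := by
  have : Nonempty V := ⟨u⟩
  obtain ⟨x, y, p, hp, hmax⟩ := Walk.exists_isPath_forall_isPath_length_le_length G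
  have hnil : ¬p.Nil := by
    have := hmax u v (.cons huv .nil) (by simp [huv.ne])
    rw [Walk.not_nil_iff_lt_length]
    simpa [Nat.one_le_iff_ne_zero, Nat.pos_iff_ne_zero] using this
  refine ⟨x, y, hp.nil_iff_eq.not.mp hnil, p.reachable, ?_, ?_⟩ <;> rw [Set.ncard_eq_one]
  · refine ⟨p.snd, Set.eq_singleton_iff_unique_mem.mpr
      ⟨p.adj_snd hnil, fun w (hw : G.Adj x w) => ?_⟩⟩
    refine hG.eq_snd_of_adj_start hp hw (by_contra fun hws => ?_)
    have := hmax _ _ _ (hp.cons hws (h := hw.symm))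
    simp at this
  · refine ⟨p.penultimate, Set.eq_singleton_iff_unique_mem.mpr
      ⟨(p.adj_penultimate hnil).symm, fun w (hw : G.Adj y w) => ?_⟩⟩
    refine hG.eq_penultimate_of_adj_end hp hw (by_contra fun hws => ?_)
    have := hmax _ _ _ (hp.concat hws hw)
    simp at this

def incidentTo (G : SimpleGraph V) (S : Set V) : SimpleGraph V where
  Adj u v := G.Adj u v ∧ (u ∈ S ∨ v ∈ S)
  symm := ⟨fun _ _ h => ⟨h.1.symm, h.2.symm⟩⟩
  loopless := ⟨fun _ h => G.irrefl h.1⟩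

variable {S : Set V}

theorem incidentTo_le : G.incidentTo S ≤ G := fun _ _ h => h.1

theorem neighborSet_incidentTo_of_mem {x : V} (hx : x ∈ S) :
    (G.incidentTo S).neighborSet x = G.neighborSet x := by
  ext v
  simp [incidentTo, hx]

theorem neighborSet_incidentTo_of_notMem {x : V} (hx : x ∉ S) :
    (G.incidentTo S).neighborSet x = G.neighborSet x ∩ S := by
  ext v
  simp [incidentTo, hx]

theorem mem_and_ncard_neighborSet_eq_one_of_incidentTo
    (hS : ∀ x ∉ S, Even (G.neighborSet x ∩ S).ncard) {x : V}
    (hx : ((G.incidentTo S).neighborSet x).ncard = 1) :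
    x ∈ S ∧ (G.neighborSet x).ncard = 1 := by
  by_cases hxS : x ∈ S
  · exact ⟨hxS, neighborSet_incidentTo_of_mem hxS ▸ hx⟩
  · rw [neighborSet_incidentTo_of_notMem hxS] at hx
    exact absurd (hx ▸ hS x hxS) Nat.not_even_one

theorem even_ncard_neighborSet_inter_of_sum_eq_zero {P Q : V → Prop} {s : Finset {a // P a}}
    (hs : ∑ i ∈ s, (fun b : {b // Q b} => if G.Adj i b then (1 : ZMod 2) else 0) = 0)
    (b : {b // Q b}) :
    Even (G.neighborSet b ∩ Subtype.val '' (s : Set {a // P a})).ncard := by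
  have hb := congrFun hs b
  simp only [Finset.sum_apply, Finset.sum_boole, Pi.zero_apply] at hb
  have hset : G.neighborSet b ∩ Subtype.val '' (s : Set {a // P a}) =
      Subtype.val '' ((s.filter fun i => G.Adj i b : Finset {a // P a}) : Set {a // P a}) := by
    ext v
    simp [G.adj_comm, and_comm]
  rw [hset, Set.ncard_image_of_injective _ Subtype.val_injective, Set.ncard_coe_finset,
    ← ZMod.natCast_eq_zero_iff_even]
  exact hb

end SimpleGraph

open SimpleGraph

section bipartiteSub

variable {V : Type*} [Fintype V] [DecidableEq V] {G : SimpleGraph V} {A : Finset V} {S : Set V}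

theorem bipartiteSub_neighborSet_inter_of_mem (hS : S ⊆ A) {x : V} (hx : x ∈ A) :
    (bipartiteSub G A).neighborSet x ∩ S = ∅ :=
  Set.eq_empty_of_forall_notMem fun v ⟨hv, hvS⟩ => by
    rcases hv.2 with ⟨-, hvA⟩ | ⟨hxA, -⟩
    · exact Finset.mem_compl.mp hvA (hS hvS)
    · exact Finset.mem_compl.mp hxA hx

theorem bipartiteSub_neighborSet_inter_of_notMem (hS : S ⊆ A) {x : V} (hx : x ∉ A) :
    (bipartiteSub G A).neighborSet x ∩ S = G.neighborSet x ∩ S := by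
  ext v
  refine ⟨fun ⟨hv, hvS⟩ => ⟨hv.1, hvS⟩, fun ⟨hv, hvS⟩ => ⟨⟨hv, ?_⟩, hvS⟩⟩
  exact Or.inr ⟨Finset.mem_compl.mpr hx, hS hvS⟩

end bipartiteSub

theorem gammaAB_columns_linearIndependent_general {V : Type*} [Fintype V] [DecidableEq V]
    (G : SimpleGraph V) (A : Finset V)
    (hforest : (bipartiteSub G A).IsAcyclic)
    (hleaf : ∀ a₁ a₂ : V, a₁ ∈ A → a₂ ∈ A →
      ((bipartiteSub G A).neighborSet a₁).ncard = 1 →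
      ((bipartiteSub G A).neighborSet a₂).ncard = 1 →
      (bipartiteSub G A).Reachable a₁ a₂ → a₁ = a₂) :
    LinearIndependent (ZMod 2)
      (fun a : {a : V // a ∈ A ∧ ((bipartiteSub G A).neighborSet a).Nonempty} =>
        (fun b : ↥(Aᶜ) => if G.Adj (a : V) (b : V) then (1 : ZMod 2) else 0)) := by
  refine linearIndependent_zmod_two_iff.mpr fun s hs => by_contra fun hne => ?_
  obtain ⟨⟨a, _, w, haw⟩, has⟩ := Finset.nonempty_iff_ne_empty.mpr hne
  set S : Set V := Subtype.val '' SetLike.coe s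
  have hSA : S ⊆ A := by
    rintro _ ⟨i, -, rfl⟩
    exact i.2.1
  have hpar : ∀ x ∉ S, Even ((bipartiteSub G A).neighborSet x ∩ S).ncard := by
    intro x _
    by_cases hxA : x ∈ A
    · simp [bipartiteSub_neighborSet_inter_of_mem hSA hxA]
    · rw [bipartiteSub_neighborSet_inter_of_notMem hSA hxA]
      exact even_ncard_neighborSet_inter_of_sum_eq_zero hs ⟨x, Finset.mem_compl.mpr hxA⟩
  have haw' : ((bipartiteSub G A).incidentTo S).Adj a w := ⟨haw, Or.inl ⟨_, has, rfl⟩⟩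
  obtain ⟨x, y, hxy, hreach, hx, hy⟩ :=
    (hforest.anti incidentTo_le).exists_ne_reachable_of_adj haw'
  obtain ⟨hxS, hx⟩ := mem_and_ncard_neighborSet_eq_one_of_incidentTo hpar hx
  obtain ⟨hyS, hy⟩ := mem_and_ncard_neighborSet_eq_one_of_incidentTo hpar hy
  exact hxy (hleaf x y (hSA hxS) (hSA hyS) hx hy (hreach.mono incidentTo_le))

/-- If `G_AB` is a forest, every connected component of `G_AB` contains at least one
edge, and each component contains at most one leaf lying in `A`, then the columns of
`Γ_AB` indexed by the non-isolated vertices of `A` are linearly independent over `F₂`. -/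
theorem gammaAB_columns_linearIndependent {V : Type*} [Fintype V] [DecidableEq V]
    (G : SimpleGraph V) (A : Finset V)
    (hforest : (bipartiteSub G A).IsAcyclic)
    (hedge : ∀ v : V, ∃ w : V, (bipartiteSub G A).Adj v w)
    (hleaf : ∀ a₁ a₂ : V, a₁ ∈ A → a₂ ∈ A →
      ((bipartiteSub G A).neighborSet a₁).ncard = 1 →
      ((bipartiteSub G A).neighborSet a₂).ncard = 1 →
      (bipartiteSub G A).Reachable a₁ a₂ → a₁ = a₂) :
    LinearIndependent (ZMod 2)
      (fun a : {a : V // a ∈ A ∧ ((bipartiteSub G A).neighborSet a).Nonempty} =>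
        (fun b : ↥(Aᶜ) => if G.Adj (a : V) (b : V) then (1 : ZMod 2) else 0)) :=
  gammaAB_columns_linearIndependent_general G A hforest hleaf
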